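/- Let Γ be the subgroup of SU(2) generated by a = !![ζ, 0; 0, conj ζ] (where ζ = exp(πi/3)) and b = !![0, i; i, 0]. Then Γ is isomorphic as a group to the dicyclic group of order 12, i.e. QuaternionGroup 3. -/

import Mathlib

open Matrix

/-- The special unitary group is a group (inverse given by conjugate transpose). -/
noncomputable instance specialUnitaryGroup.instGroup (n : Type*) [DecidableEq n] [Fintype n] :
    Group (Matrix.specialUnitaryGroup n ℂ) where
  inv A := ⟨star A.1, by
    obtain ⟨hu, hd⟩ := (Matrix.mem_specialUnitaryGroup_iff).mp A.2
    refine (Matrix.mem_specialUnitaryGroup_iff).mpr ⟨Unitary.star_mem hu, ?_⟩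
    rw [Matrix.star_eq_conjTranspose, Matrix.det_conjTranspose, hd]
    simp⟩
  inv_mul_cancel A := by
    ext1
    exact ((Matrix.mem_specialUnitaryGroup_iff).mp A.2).1.1

/-- ζ = exp(πi/3) -/
noncomputable def zeta : ℂ := Complex.exp ((Real.pi : ℂ) * Complex.I / 3)

/-- The matrix a = !![ζ, 0; 0, conj ζ]. -/
noncomputable def aMat : Matrix (Fin 2) (Fin 2) ℂ := !![zeta, 0; 0, (starRingEnd ℂ) zeta]

/-- The matrix b = !![0, i; i, 0]. -/
def bMat : Matrix (Fin 2) (Fin 2) ℂ := !![0, Complex.I; Complex.I, 0]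


lemma conj_zeta : (starRingEnd ℂ) zeta = Complex.exp (-((Real.pi : ℂ) * Complex.I / 3)) := by
  rw [zeta, ← Complex.exp_conj]
  congr 1
  simp [map_div₀, Complex.conj_ofReal, Complex.conj_I, map_ofNat]
  ring

lemma zeta_mul_conj : zeta * (starRingEnd ℂ) zeta = 1 := by
  rw [conj_zeta, zeta, ← Complex.exp_add]
  simp

lemma zeta_pow_three : zeta ^ 3 = -1 := by
  rw [zeta, ← Complex.exp_nat_mul]
  push_cast
  rw [show (3 : ℂ) * ((Real.pi : ℂ) * Complex.I / 3) = Real.pi * Complex.I by ring]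
  exact Complex.exp_pi_mul_I

lemma zeta_pow_six : zeta ^ 6 = 1 := by
  have : zeta ^ 6 = (zeta ^ 3) ^ 2 := by ring
  rw [this, zeta_pow_three]; ring

lemma ha : aMat ∈ Matrix.specialUnitaryGroup (Fin 2) ℂ := by
  refine (Matrix.mem_specialUnitaryGroup_iff).mpr ⟨?_, ?_⟩
  · rw [Matrix.mem_unitaryGroup_iff]
    show aMat * aMatᴴ = 1
    ext i j
    fin_cases i <;> fin_cases j <;>
      simp [aMat, Matrix.mul_apply, Fin.sum_univ_two, Matrix.one_apply, mul_comm,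
        zeta_mul_conj]
  · simp [aMat, Matrix.det_fin_two, zeta_mul_conj]

lemma hb : bMat ∈ Matrix.specialUnitaryGroup (Fin 2) ℂ := by
  refine (Matrix.mem_specialUnitaryGroup_iff).mpr ⟨?_, ?_⟩
  · rw [Matrix.mem_unitaryGroup_iff]
    show bMat * bMatᴴ = 1
    ext i j
    fin_cases i <;> fin_cases j <;>
      simp [bMat, Matrix.mul_apply, Fin.sum_univ_two, Matrix.one_apply, Complex.I_mul_I]
  · simp [bMat, Matrix.det_fin_two, Complex.I_mul_I]

lemma zeta_prim : IsPrimitiveRoot zeta 6 := by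
  have h := Complex.isPrimitiveRoot_exp 6 (by norm_num)
  have : zeta = Complex.exp (2 * Real.pi * Complex.I / (6 : ℕ)) := by
    rw [zeta]; congr 1; push_cast; ring
  rwa [this]

abbrev G := Matrix.specialUnitaryGroup (Fin 2) ℂ

noncomputable def AA : G := ⟨aMat, ha⟩
noncomputable def BB : G := ⟨bMat, hb⟩

lemma aMat_pow (k : ℕ) : aMat ^ k = !![zeta ^ k, 0; 0, ((starRingEnd ℂ) zeta) ^ k] := by
  induction k with
  | zero => simp [Matrix.one_fin_two]
  | succ n ih => rw [pow_succ, ih, aMat, Matrix.mul_fin_two]; simp [pow_succ]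

lemma conj_zeta_pow_six : ((starRingEnd ℂ) zeta) ^ 6 = 1 := by
  rw [← map_pow, zeta_pow_six, _root_.map_one]

lemma AA_pow_six : AA ^ 6 = 1 := by
  ext1
  show aMat ^ 6 = 1
  rw [aMat_pow, zeta_pow_six, conj_zeta_pow_six, Matrix.one_fin_two]

lemma BB_sq : BB ^ 2 = AA ^ 3 := by
  ext1
  show bMat ^ 2 = aMat ^ 3
  rw [aMat_pow, zeta_pow_three, pow_two, bMat, Matrix.mul_fin_two]
  have : ((starRingEnd ℂ) zeta) ^ 3 = -1 := by rw [← map_pow, zeta_pow_three]; simp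
  rw [this]
  simp [Complex.I_mul_I]

lemma AA_mul_BB : AA * BB = BB * AA⁻¹ := by
  ext1
  show aMat * bMat = bMat * star aMat
  rw [Matrix.star_eq_conjTranspose]
  ext i j
  fin_cases i <;> fin_cases j <;>
    simp [aMat, bMat, Matrix.mul_apply, Fin.sum_univ_two, mul_comm]

noncomputable def chi (i : ZMod 6) : G := AA ^ i.val

lemma AA_pow_mod (m : ℕ) : AA ^ (m % 6) = AA ^ m := by
  conv_rhs => rw [← Nat.mod_add_div m 6, pow_add, pow_mul, AA_pow_six, one_pow, mul_one]

lemma chi_add (i j : ZMod 6) : chi (i + j) = chi i * chi j := by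
  rw [chi, chi, chi, ZMod.val_add, AA_pow_mod, pow_add]

lemma chi_zero : chi 0 = 1 := by simp [chi]

lemma chi_neg (i : ZMod 6) : chi (-i) = (chi i)⁻¹ := by
  have : chi (-i) * chi i = 1 := by rw [← chi_add, neg_add_cancel, chi_zero]
  exact eq_inv_of_mul_eq_one_left this

lemma pow_mul_BB (m : ℕ) : AA ^ m * BB = BB * (AA ^ m)⁻¹ := by
  induction m with
  | zero => simp
  | succ k ih =>
      rw [pow_succ, mul_assoc, AA_mul_BB, ← mul_assoc, ih]
      group

lemma chi_mul_BB (i : ZMod 6) : chi i * BB = BB * chi (-i) := by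
  rw [chi_neg, chi, pow_mul_BB]

lemma chi_three : chi 3 = AA ^ 3 := rfl

open QuaternionGroup in
noncomputable def f : QuaternionGroup 3 →* G where
  toFun x := match x with
    | .a i => chi i
    | .xa i => BB * chi i
  map_one' := by rw [one_def]; exact chi_zero
  map_mul' x y := by
    rcases x with i | i <;> rcases y with j | j
    · rw [a_mul_a]
      show chi (i + j) = chi i * chi j
      rw [chi_add]
    · rw [a_mul_xa]
      show BB * chi (j - i) = chi i * (BB * chi j)
      rw [← mul_assoc, chi_mul_BB, mul_assoc, ← chi_add, sub_eq_neg_add]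
    · rw [xa_mul_a]
      show BB * chi (i + j) = BB * chi i * chi j
      rw [mul_assoc, chi_add]
    · rw [xa_mul_xa]
      show chi ((3 : ℕ) + j - i) = (BB * chi i) * (BB * chi j)
      rw [mul_assoc, ← mul_assoc (chi i), chi_mul_BB, ← mul_assoc, ← mul_assoc, ← pow_two,
        BB_sq, ← chi_three, ← chi_add, ← chi_add]
      congr 1
      push_cast
      ring

lemma chi_eq_one_iff {i : ZMod 6} (h : chi i = 1) : i = 0 := by
  have hv : aMat ^ i.val = 1 := congrArg Subtype.val h
  rw [aMat_pow] at hv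
  have h00 := congrArg (fun M => M 0 0) hv
  simp [Matrix.one_apply] at h00
  have hdvd : (6 : ℕ) ∣ i.val := (zeta_prim.pow_eq_one_iff_dvd _).mp h00
  have : i.val = 0 := Nat.eq_zero_of_dvd_of_lt hdvd i.val_lt
  exact (ZMod.val_eq_zero i).mp this

lemma BB_chi_ne_one (i : ZMod 6) : BB * chi i ≠ 1 := by
  intro h
  have hv : bMat * aMat ^ i.val = 1 := congrArg Subtype.val h
  rw [aMat_pow, bMat, Matrix.mul_fin_two] at hv
  have h00 := congrArg (fun M => M 0 0) hv
  simp [Matrix.one_apply] at h00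

lemma f_inj : Function.Injective f := by
  rw [injective_iff_map_eq_one]
  rintro (i | i) hx
  · have hi : chi i = 1 := hx
    rw [QuaternionGroup.one_def]
    exact congrArg QuaternionGroup.a (chi_eq_one_iff hi)
  · exact absurd hx (BB_chi_ne_one i)

lemma f_range : f.range = Subgroup.closure {AA, BB} := by
  apply le_antisymm
  · rintro x ⟨y, rfl⟩
    have hA : AA ∈ Subgroup.closure {AA, BB} := Subgroup.subset_closure (Set.mem_insert _ _)
    have hB : BB ∈ Subgroup.closure {AA, BB} :=
      Subgroup.subset_closure (Set.mem_insert_of_mem _ rfl)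
    rcases y with i | i
    · exact pow_mem hA _
    · exact mul_mem hB (pow_mem hA _)
  · rw [Subgroup.closure_le]
    rintro x (rfl | rfl)
    · exact ⟨.a 1, by show chi 1 = AA; rw [chi, show (1 : ZMod 6).val = 1 from rfl, pow_one]⟩
    · exact ⟨.xa 0, by show BB * chi 0 = BB; rw [chi_zero, mul_one]⟩


/-- Γ = ⟨a, b⟩ ≤ SU(2) is isomorphic to the dicyclic group of order 12. -/
theorem stmt2 :
    ∃ (ha : aMat ∈ Matrix.specialUnitaryGroup (Fin 2) ℂ)
      (hb : bMat ∈ Matrix.specialUnitaryGroup (Fin 2) ℂ),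
      Nonempty ((Subgroup.closure
        ({⟨aMat, ha⟩, ⟨bMat, hb⟩} : Set (Matrix.specialUnitaryGroup (Fin 2) ℂ)))
        ≃* QuaternionGroup 3) :=
  ⟨ha, hb, ⟨((MonoidHom.ofInjective f_inj).trans (MulEquiv.subgroupCongr f_range)).symm⟩⟩
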